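/- Let F : ℝ^d → S^ℓ be a matrix convex function. Then for all i, j ∈ {1,…,ℓ} with i ≠ j, the component function F_ij : ℝ^d → ℝ is DC, i.e. it can be represented as the difference of two convex real-valued functions on ℝ^d. -/

import Mathlib

open Matrix

/-- A matrix-valued function is matrix convex if
`α • F x₁ + (1 - α) • F x₂ - F (α • x₁ + (1 - α) • x₂)` is positive semidefinite. -/
def MatrixConvex {d l : ℕ} (F : EuclideanSpace ℝ (Fin d) → Matrix (Fin l) (Fin l) ℝ) : Prop :=
  ∀ (x₁ x₂ : EuclideanSpace ℝ (Fin d)) (α : ℝ), α ∈ Set.Icc (0 : ℝ) 1 →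
    (α • F x₁ + (1 - α) • F x₂ - F (α • x₁ + (1 - α) • x₂)).PosSemidef

lemma quad_convex {d l : ℕ} (F : EuclideanSpace ℝ (Fin d) → Matrix (Fin l) (Fin l) ℝ)
    (hF : MatrixConvex F) (v : Fin l → ℝ) :
    ConvexOn ℝ Set.univ (fun x => v ⬝ᵥ F x *ᵥ v) := by
  refine ⟨convex_univ, ?_⟩
  intro x₁ _ x₂ _ a b ha hb hab
  have hb' : b = 1 - a := by linarith
  subst hb'
  have h := (hF x₁ x₂ a ⟨ha, by linarith⟩).dotProduct_mulVec_nonneg v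
  simp only [sub_mulVec, add_mulVec, smul_mulVec, dotProduct_sub, dotProduct_add,
    dotProduct_smul, star_trivial, smul_eq_mul] at h ⊢
  linarith

lemma quad_single {l : ℕ} (M : Matrix (Fin l) (Fin l) ℝ) (i : Fin l) :
    (Pi.single i 1 : Fin l → ℝ) ⬝ᵥ M *ᵥ Pi.single i 1 = M i i := by
  simp [dotProduct, Matrix.mulVec, Pi.single_apply]

lemma quad_pair {l : ℕ} (M : Matrix (Fin l) (Fin l) ℝ) (i j : Fin l) :
    ((Pi.single i 1 + Pi.single j 1) : Fin l → ℝ) ⬝ᵥ M *ᵥ (Pi.single i 1 + Pi.single j 1)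
      = M i i + M i j + M j i + M j j := by
  simp only [dotProduct_add, add_dotProduct, add_mulVec, dotProduct_add, quad_single]
  simp [dotProduct, Matrix.mulVec, Pi.single_apply, mul_add, mul_ite, mul_one, mul_zero,
    Finset.sum_add_distrib, Finset.sum_ite_eq', Finset.mem_univ]
  ring

theorem stmt_2 {d l : ℕ} (F : EuclideanSpace ℝ (Fin d) → Matrix (Fin l) (Fin l) ℝ)
    (hsymm : ∀ x, (F x).IsSymm) (hF : MatrixConvex F) :
    ∀ i j : Fin l, i ≠ j →
      ∃ g h : EuclideanSpace ℝ (Fin d) → ℝ,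
        ConvexOn ℝ Set.univ g ∧ ConvexOn ℝ Set.univ h ∧ ∀ x, F x i j = g x - h x := by
  intro i j hij
  refine ⟨fun x => (2:ℝ)⁻¹ •
      ((Pi.single i 1 + Pi.single j 1) ⬝ᵥ F x *ᵥ (Pi.single i 1 + Pi.single j 1)),
    fun x => (2:ℝ)⁻¹ • ((Pi.single i 1 : Fin l → ℝ) ⬝ᵥ F x *ᵥ Pi.single i 1
      + (Pi.single j 1 : Fin l → ℝ) ⬝ᵥ F x *ᵥ Pi.single j 1), ?_, ?_, ?_⟩
  · exact (quad_convex F hF _).smul (by norm_num)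
  · exact ((quad_convex F hF _).add (quad_convex F hF _)).smul (by norm_num)
  · intro x
    have hji : F x j i = F x i j := by
      simpa using ((hsymm x).apply i j)
    simp only [quad_pair, quad_single, smul_eq_mul, hji]
    ring
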